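/- arXiv:2303.11077 — 3 statements merged into one kernel-verified Lean document; each statement's English description precedes it below -/
import Mathlib

section
/- No deterministic query algorithm making at most N−2 queries to the oracle c can output, for every instance c : {0,…,N−1} → [0,1) with average value 3/16, a probability distribution P_A with |P_A(x) − c(x)/∑_y c(y)| ≤ 1/(100N) for all x. Formally: for any function A assigning to each c a distribution depending only on the values of c at a fixed set Q of at most N−2 points, there exist two instances c, c′ agreeing on Q and both having average 3/16, and a point x, such that |c(x)/∑_y c(y) − c′(x)/∑_y c′(y)| > 2/(100N). -/
open Finset

/-! Take the constant instance `3/16` and its perturbation moving mass `1/16` from `x₁` to `x₂`,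
two points outside `Q`. Both sum to `3N/16`, so their proportional distributions differ at `x₁`
by `(1/16) / (3N/16) = 1/(3N) > 2/(100N)`. -/

theorem Finset.exists_ne_mem_sdiff_of_card_add_two_le {α : Type*} [DecidableEq α]
    {s t : Finset α} (h : #s + 2 ≤ #t) : ∃ a ∈ t \ s, ∃ b ∈ t \ s, a ≠ b :=
  one_lt_card.mp (by have := le_card_sdiff s t; omega)

theorem Finset.sum_add_single_sub_single {ι M : Type*} [DecidableEq ι] [AddCommGroup M]
    {s : Finset ι} {a b : ι} (ha : a ∈ s) (hb : b ∈ s) (f : ι → M) (δ : M) :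
    ∑ x ∈ s, (f x + (Pi.single a δ : ι → M) x - (Pi.single b δ : ι → M) x) =
      ∑ x ∈ s, f x := by
  simp [sum_sub_distrib, sum_add_distrib, sum_pi_single', ha, hb]

theorem stmt11_general (N : ℕ) (hN : 4 ≤ N)
    (Q : Finset ℕ) (hQcard : Q.card ≤ N - 2) :
    ∃ c c' : ℕ → ℝ,
      (∀ x ∈ Finset.range N, c x ∈ Set.Ico (0 : ℝ) 1) ∧
      (∀ x ∈ Finset.range N, c' x ∈ Set.Ico (0 : ℝ) 1) ∧
      (∀ x ∈ Q, c x = c' x) ∧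
      (1 / (N : ℝ)) * ∑ x ∈ Finset.range N, c x = 3 / 16 ∧
      (1 / (N : ℝ)) * ∑ x ∈ Finset.range N, c' x = 3 / 16 ∧
      ∃ x ∈ Finset.range N,
        2 / (100 * (N : ℝ)) <
          |c x / ∑ y ∈ Finset.range N, c y - c' x / ∑ y ∈ Finset.range N, c' y| := by
  obtain ⟨x₁, hx₁, x₂, hx₂, hne⟩ :=
    exists_ne_mem_sdiff_of_card_add_two_le (s := Q) (t := range N) (by rw [card_range]; omega)
  rw [mem_sdiff] at hx₁ hx₂
  set c : ℕ → ℝ := fun _ => 3 / 16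
  set c' : ℕ → ℝ := fun x =>
    c x + (Pi.single x₂ (1 / 16) : ℕ → ℝ) x - (Pi.single x₁ (1 / 16) : ℕ → ℝ) x
  have hsum : ∑ x ∈ range N, c x = 3 * N / 16 := by
    simp only [c, sum_const, card_range, nsmul_eq_mul]; ring
  have hsum' : ∑ x ∈ range N, c' x = 3 * N / 16 :=
    (sum_add_single_sub_single hx₂.1 hx₁.1 c _).trans hsum
  have hNpos : (0 : ℝ) < N := by positivity
  refine ⟨c, c', fun _ _ => by norm_num [c], fun x _ => ?_, fun x hx => ?_,
    by rw [hsum]; field_simp, by rw [hsum']; field_simp, x₁, hx₁.1, ?_⟩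
  · simp only [c', c, Pi.single_apply]
    split_ifs <;> norm_num
  · simp [c', Pi.single_apply, ne_of_mem_of_not_mem hx hx₁.2, ne_of_mem_of_not_mem hx hx₂.2]
  · have hgap : c x₁ - c' x₁ = 1 / 16 := by simp [c', hne]
    rw [hsum, hsum', ← sub_div, hgap, abs_of_pos (by positivity),
      div_lt_div_iff₀ (by positivity) (by positivity)]
    linarith

/-- Classical lower bound for proportional sampling: for any query set `Q` of at
most `N - 2` points, there are two instances with average `3/16`, agreeing on
`Q`, whose proportional-sampling distributions differ by more than `2/(100 N)`
at some point; hence no algorithm reading only `Q` can be `1/(100 N)`-correct on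
both. -/
theorem stmt11 (N : ℕ) (hN : 4 ≤ N) (hEven : Even N)
    (Q : Finset ℕ) (hQ : Q ⊆ Finset.range N) (hQcard : Q.card ≤ N - 2) :
    ∃ c c' : ℕ → ℝ,
      (∀ x ∈ Finset.range N, c x ∈ Set.Ico (0 : ℝ) 1) ∧
      (∀ x ∈ Finset.range N, c' x ∈ Set.Ico (0 : ℝ) 1) ∧
      (∀ x ∈ Q, c x = c' x) ∧
      (1 / (N : ℝ)) * ∑ x ∈ Finset.range N, c x = 3 / 16 ∧
      (1 / (N : ℝ)) * ∑ x ∈ Finset.range N, c' x = 3 / 16 ∧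
      ∃ x ∈ Finset.range N,
        2 / (100 * (N : ℝ)) <
          |c x / ∑ y ∈ Finset.range N, c y - c' x / ∑ y ∈ Finset.range N, c' y| :=
  stmt11_general N hN Q hQcard
end

section
/- Let p(w) be a Laurent polynomial with real coefficients satisfying p(w) = p(1/w) (reciprocity) and p(w) > 0 for all w on the unit circle. Then there exists a Laurent polynomial b(w) with real coefficients such that b(w)·b(1/w) = p(w) for all w ≠ 0. -/
open Finset

/-- Evaluation of a Laurent polynomial with real coefficients at a nonzero
complex number. -/
noncomputable def lEval (p : ℤ →₀ ℝ) (z : ℂ) : ℂ :=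
  ∑ k ∈ p.support, (p k : ℂ) * z ^ k

/-!
Multiplying by `X ^ n` turns `p` into a polynomial `P` of degree `2n` whose complex roots are
closed under `r ↦ r⁻¹` (reciprocity) and under conjugation (real coefficients), none of them on
the unit circle (positivity). With `S` the roots inside the unit disc, `B = ∏_{s ∈ S} (X - s)`
has real coefficients and `p(z) = α B(z) B(1/z)` for a constant `α`. At `z = 1` both `p(1)` and
`B(1)²` are positive reals, so `α > 0` and `b = √α B` works.
-/

open Polynomial

theorem Multiset.map_filter_eq_filter_of_map_eq {α : Type*} {f : α → α} {s : Multiset α}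
    (hs : s.map f = s) {q q' : α → Prop} [DecidablePred q] [DecidablePred q']
    (h : ∀ x ∈ s, q' (f x) ↔ q x) : (s.filter q).map f = s.filter q' := by
  conv_rhs => rw [← hs, Multiset.filter_map]
  exact congrArg _ (Multiset.filter_congr fun x hx => (h x hx).symm)

theorem Multiset.eq_filter_add_map_inv {K : Type*} [NormedDivisionRing K] (R : Multiset K)
    (hinv : R.map (·⁻¹) = R) (hR0 : ∀ r ∈ R, r ≠ 0) (hR1 : ∀ r ∈ R, ‖r‖ ≠ 1) :
    R = R.filter (‖·‖ < 1) + (R.filter (‖·‖ < 1)).map (·⁻¹) := by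
  conv_lhs => rw [← Multiset.filter_add_not (‖·‖ < 1) R]
  congr 1
  refine (Multiset.map_filter_eq_filter_of_map_eq hinv fun r hr => ?_).symm
  rw [norm_inv, inv_lt_one₀ (norm_pos_iff.2 (hR0 r hr)), not_lt]
  exact ⟨fun h => lt_of_le_of_ne h (hR1 r hr), le_of_lt⟩

theorem Multiset.prod_map_neg_ne_zero {K : Type*} [Field K] {s : Multiset K}
    (hs : ∀ a ∈ s, a ≠ 0) : (s.map (-·)).prod ≠ 0 :=
  Multiset.prod_ne_zero fun h => by
    obtain ⟨a, ha, ha0⟩ := Multiset.mem_map.1 h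
    exact hs a ha (neg_eq_zero.1 ha0)

theorem Multiset.prod_map_neg_mul_prod_map_sub_inv {K : Type*} [Field K] (s : Multiset K)
    (hs : ∀ a ∈ s, a ≠ 0) {x : K} (hx : x ≠ 0) :
    (s.map (-·)).prod * (s.map (x - ·⁻¹)).prod =
      x ^ Multiset.card s * (s.map (x⁻¹ - ·)).prod := by
  induction s using Multiset.induction_on with
  | empty => simp
  | cons a s ih =>
    have ha : a ≠ 0 := hs a (Multiset.mem_cons_self a s)
    have ih := ih fun b hb => hs b (Multiset.mem_cons_of_mem hb)
    simp only [Multiset.map_cons, Multiset.prod_cons, Multiset.card_cons, pow_succ]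
    linear_combination (-a * x + a * a⁻¹) * ih +
      x ^ Multiset.card s * (s.map (x⁻¹ - ·)).prod * (mul_inv_cancel₀ ha - mul_inv_cancel₀ hx)

theorem Polynomial.eval_reverse {K : Type*} [Field K] (f : K[X]) {x : K} (hx : x ≠ 0) :
    f.reverse.eval x = x ^ f.natDegree * f.eval x⁻¹ := by
  let := invertibleOfNonzero (inv_ne_zero hx)
  have h := eval₂_reverse_mul_pow (RingHom.id K) x⁻¹ f
  rw [invOf_eq_inv, inv_inv] at h
  rw [← eval₂_id, ← eval₂_id, ← h, inv_pow, mul_left_comm, mul_inv_cancel₀ (pow_ne_zero _ hx),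
    mul_one]

theorem Polynomial.roots_reverse {K : Type*} [Field K] [IsAlgClosed K] (f : K[X])
    (h0 : f.coeff 0 ≠ 0) : f.reverse.roots = f.roots.map (·⁻¹) := by
  have hf : f ≠ 0 := by rintro rfl; exact h0 (coeff_zero 0)
  have hR0 : ∀ r ∈ f.roots, r ≠ 0 := by
    rintro r hr rfl
    exact h0 (by rw [coeff_zero_eq_eval_zero]; exact isRoot_of_mem_roots hr)
  -- off `0`: `x ^ N * f(x⁻¹) = c * ∏ (1 - r x) = c * ∏ (-r) * ∏ (x - r⁻¹)`
  suffices f.reverse = C (f.leadingCoeff * (f.roots.map (-·)).prod) *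
      ((f.roots.map (·⁻¹)).map (X - C ·)).prod by
    have hc := mul_ne_zero (leadingCoeff_ne_zero.2 hf) (Multiset.prod_map_neg_ne_zero hR0)
    rw [this, roots_C_mul _ hc, roots_multiset_prod_X_sub_C]
  refine eq_of_infinite_eval_eq _ _ ((Set.finite_singleton 0).infinite_compl.mono fun x hx => ?_)
  have hx : x ≠ 0 := hx
  have hsplit := IsAlgClosed.splits f
  rw [Set.mem_ofPred_eq, eval_reverse f hx, hsplit.eval_eq_prod_roots,
    ← splits_iff_card_roots.1 hsplit]
  simp only [eval_mul, eval_C, eval_multiset_prod, Multiset.map_map, Function.comp_def, eval_sub,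
    eval_X]
  linear_combination -f.leadingCoeff * Multiset.prod_map_neg_mul_prod_map_sub_inv _ hR0 hx

theorem Polynomial.Splits.eval_eq_of_roots_eq_add_map_inv {K : Type*} [Field K] {G : K[X]}
    (hG : G.Splits) {S : Multiset K} (hS0 : ∀ s ∈ S, s ≠ 0) (hRS : G.roots = S + S.map (·⁻¹))
    {z : K} (hz : z ≠ 0) :
    G.eval z = G.leadingCoeff * (S.map (-·)).prod⁻¹ * z ^ Multiset.card S *
      ((S.map (z - ·)).prod * (S.map (z⁻¹ - ·)).prod) := by
  rw [hG.eval_eq_prod_roots, hRS, Multiset.map_add, Multiset.prod_add, Multiset.map_map]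
  simp only [Function.comp_def]
  linear_combination G.leadingCoeff * (S.map (-·)).prod⁻¹ * (S.map (z - ·)).prod *
      Multiset.prod_map_neg_mul_prod_map_sub_inv S hS0 hz -
    G.leadingCoeff * (S.map (z - ·)).prod * (S.map (z - ·⁻¹)).prod *
      inv_mul_cancel₀ (Multiset.prod_map_neg_ne_zero hS0)

theorem Polynomial.exists_map_ofReal_eq {B : ℂ[X]} (h : B.map (starRingEnd ℂ) = B) :
    ∃ Q : ℝ[X], Q.map (algebraMap ℝ ℂ) = B := by
  rw [← mem_lifts, lifts_iff_coeff_lifts]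
  intro n
  obtain ⟨r, hr⟩ := Complex.conj_eq_iff_real.1 (by rw [← coeff_map, h] :
    starRingEnd ℂ (B.coeff n) = B.coeff n)
  exact ⟨r, hr.symm⟩

theorem Polynomial.exists_roots_eq_add_map_inv (P : ℝ[X]) (hrev : P.reverse = P)
    (hcirc : ∀ z : ℂ, ‖z‖ = 1 → aeval z P ≠ 0) :
    ∃ S : Multiset ℂ, (∀ s ∈ S, s ≠ 0) ∧ S.map (starRingEnd ℂ) = S ∧
      (P.map (algebraMap ℝ ℂ)).roots = S + S.map (·⁻¹) := by
  classical
  have hinj : Function.Injective (algebraMap ℝ ℂ) := (algebraMap ℝ ℂ).injective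
  set G := P.map (algebraMap ℝ ℂ) with hG
  set R := G.roots
  have hP : P ≠ 0 := by rintro rfl; exact hcirc 1 (by simp) (by simp)
  have hG0 : G.coeff 0 ≠ 0 := by
    rw [coeff_map, ← hrev, coeff_zero_reverse]
    exact (map_ne_zero_iff _ hinj).2 (leadingCoeff_ne_zero.2 hP)
  have hR0 : ∀ r ∈ R, r ≠ 0 := by
    rintro r hr rfl
    exact hG0 (by rw [coeff_zero_eq_eval_zero]; exact isRoot_of_mem_roots hr)
  have hR1 : ∀ r ∈ R, ‖r‖ ≠ 1 := fun r hr h =>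
    hcirc r h (by rw [← eval_map_algebraMap]; exact isRoot_of_mem_roots hr)
  have hGrev : G.reverse = G := by
    rw [reverse, hG, natDegree_map_eq_of_injective hinj, reflect_map]
    exact congrArg (map (algebraMap ℝ ℂ)) hrev
  have hRinv : R.map (·⁻¹) = R := by rw [← roots_reverse G hG0, hGrev]
  have hRconj : R.map (starRingEnd ℂ) = R := by
    rw [← (IsAlgClosed.splits G).roots_map, hG, Polynomial.map_map]
    congr 2
    exact RingHom.ext Complex.conj_ofReal
  refine ⟨R.filter (‖·‖ < 1), fun s hs => hR0 s (Multiset.mem_of_mem_filter hs), ?_,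
    Multiset.eq_filter_add_map_inv R hRinv hR0 hR1⟩
  exact Multiset.map_filter_eq_filter_of_map_eq hRconj fun r _ => by rw [Complex.norm_conj]

theorem Polynomial.exists_aeval_eq_mul_aeval_mul_aeval_inv (P : ℝ[X]) (hrev : P.reverse = P)
    (hcirc : ∀ z : ℂ, ‖z‖ = 1 → aeval z P ≠ 0) :
    ∃ (Q : ℝ[X]) (α : ℂ) (m : ℕ), P.natDegree = 2 * m ∧
      ∀ z : ℂ, z ≠ 0 → aeval z P = α * z ^ m * (aeval z Q * aeval z⁻¹ Q) := by
  obtain ⟨S, hS0, hSconj, hRS⟩ := exists_roots_eq_add_map_inv P hrev hcirc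
  set G := P.map (algebraMap ℝ ℂ)
  have hsplit : G.Splits := IsAlgClosed.splits G
  obtain ⟨Q, hQ⟩ := exists_map_ofReal_eq (B := (S.map (X - C ·)).prod) (by
    rw [Polynomial.map_multiset_prod, Multiset.map_map]
    conv_rhs => rw [← hSconj, Multiset.map_map]
    simp)
  have hQeval (y : ℂ) : aeval y Q = (S.map (y - ·)).prod := by
    rw [← eval_map_algebraMap, hQ, eval_multiset_prod, Multiset.map_map]
    simp
  refine ⟨Q, G.leadingCoeff * (S.map (-·)).prod⁻¹, Multiset.card S, ?_, fun z hz => ?_⟩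
  · rw [← natDegree_map_eq_of_injective (algebraMap ℝ ℂ).injective,
      ← splits_iff_card_roots.1 hsplit, hRS, Multiset.card_add, Multiset.card_map, two_mul]
  · rw [hQeval, hQeval, ← eval_map_algebraMap]
    exact hsplit.eval_eq_of_roots_eq_add_map_inv hS0 hRS hz

noncomputable def laurentOfPoly (q : ℝ[X]) : ℤ →₀ ℝ :=
  q.toFinsupp.coeff.embDomain Nat.castEmbedding

theorem lEval_laurentOfPoly (q : ℝ[X]) (z : ℂ) : lEval (laurentOfPoly q) z = aeval z q := by
  rw [lEval, laurentOfPoly, Finsupp.support_embDomain, Finset.sum_map, aeval_def, eval₂_eq_sum,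
    sum_def]
  refine Finset.sum_congr rfl fun m _ => ?_
  rw [Finsupp.embDomain_apply_self]
  simp [coeff]

noncomputable def shiftPoly (p : ℤ →₀ ℝ) (n : ℕ) : ℝ[X] :=
  ∑ k ∈ p.support, C (p k) * X ^ (k + n).toNat

section Shift

variable {p : ℤ →₀ ℝ} {n : ℕ}

theorem coeff_shiftPoly (hn : ∀ k ∈ p.support, -(n : ℤ) ≤ k) (m : ℕ) :
    (shiftPoly p n).coeff m = p (m - n) := by
  rw [shiftPoly, finsetSum_coeff]
  simp only [coeff_C_mul, coeff_X_pow, mul_ite, mul_one, mul_zero]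
  have hcond : ∀ k ∈ p.support,
      (if m = (k + n).toNat then p k else 0) = if k = m - n then p k else 0 := fun k hk =>
    if_congr (by have := hn k hk; omega) rfl rfl
  rw [Finset.sum_congr rfl hcond, Finset.sum_ite_eq' p.support ((m : ℤ) - n) p]
  split_ifs with hm
  · rfl
  · exact (Finsupp.notMem_support_iff.1 hm).symm

theorem lEval_eq_zpow_mul_aeval_shiftPoly (hn : ∀ k ∈ p.support, -(n : ℤ) ≤ k) {z : ℂ}
    (hz : z ≠ 0) : lEval p z = z ^ (-(n : ℤ)) * aeval z (shiftPoly p n) := by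
  rw [lEval, shiftPoly, map_sum, Finset.mul_sum]
  refine Finset.sum_congr rfl fun k hk => ?_
  rw [map_mul, aeval_C, map_pow, aeval_X, ← zpow_natCast,
    Int.toNat_of_nonneg (by linarith [hn k hk]), mul_left_comm, ← zpow_add₀ hz, add_comm k,
    neg_add_cancel_left]
  rfl

end Shift

def absDegree (p : ℤ →₀ ℝ) : ℕ :=
  p.support.sup Int.natAbs

section Reciprocal

variable {p : ℤ →₀ ℝ}

theorem natAbs_le_absDegree {k : ℤ} (hk : k ∈ p.support) : k.natAbs ≤ absDegree p :=
  Finset.le_sup (f := Int.natAbs) hk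

theorem neg_absDegree_le {k : ℤ} (hk : k ∈ p.support) : -(absDegree p : ℤ) ≤ k := by
  have := natAbs_le_absDegree hk
  omega

theorem apply_absDegree_ne_zero (hrec : ∀ k, p k = p (-k)) (hp : p ≠ 0) : p (absDegree p) ≠ 0 := by
  obtain ⟨k, hk, hsup⟩ :=
    Finset.exists_mem_eq_sup p.support (Finsupp.support_nonempty_iff.2 hp) Int.natAbs
  rw [absDegree, hsup]
  rcases Int.natAbs_eq k with h | h
  · rwa [← h, ← Finsupp.mem_support_iff]
  · rwa [hrec, ← h, ← Finsupp.mem_support_iff]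

theorem natDegree_shiftPoly_absDegree (hrec : ∀ k, p k = p (-k)) (hp : p ≠ 0) :
    (shiftPoly p (absDegree p)).natDegree = 2 * absDegree p := by
  refine natDegree_eq_of_le_of_coeff_ne_zero ?_ ?_
  · refine natDegree_le_iff_coeff_eq_zero.2 fun m hm => ?_
    rw [coeff_shiftPoly fun _ => neg_absDegree_le]
    by_contra h
    have := natAbs_le_absDegree (Finsupp.mem_support_iff.2 h)
    omega
  · rw [coeff_shiftPoly fun _ => neg_absDegree_le]
    convert apply_absDegree_ne_zero hrec hp using 2
    push_cast
    ring

theorem reverse_shiftPoly_absDegree (hrec : ∀ k, p k = p (-k)) (hp : p ≠ 0) :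
    (shiftPoly p (absDegree p)).reverse = shiftPoly p (absDegree p) := by
  ext m
  rw [coeff_reverse, natDegree_shiftPoly_absDegree hrec hp]
  rcases le_or_gt m (2 * absDegree p) with hm | hm
  · rw [revAt_le hm, coeff_shiftPoly (fun _ => neg_absDegree_le),
      coeff_shiftPoly (fun _ => neg_absDegree_le), hrec]
    congr 1
    omega
  · rw [revAt_eq_self_of_lt hm]

end Reciprocal

theorem exists_lEval_mul_lEval_inv_eq (p : ℤ →₀ ℝ) (Q : ℝ[X]) (α : ℂ) {r : ℝ} (hr : 0 < r)
    (hp1 : lEval p 1 = r) (h : ∀ z : ℂ, z ≠ 0 → lEval p z = α * (aeval z Q * aeval z⁻¹ Q)) :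
    ∃ b : ℤ →₀ ℝ, ∀ z : ℂ, z ≠ 0 → lEval b z * lEval b z⁻¹ = lEval p z := by
  -- at `z = 1` the identity reads `r = α t²` with `t = Q(1)` real, so `α` is a positive real
  set t := Q.eval 1
  have hrt : (r : ℂ) = α * (t : ℂ) ^ 2 := by
    rw [← hp1, h 1 one_ne_zero, inv_one, ← map_one (algebraMap ℝ ℂ),
      aeval_algebraMap_apply_eq_algebraMap_eval, Complex.coe_algebraMap]
    ring
  have ht : (t : ℂ) ≠ 0 := by
    rintro h0
    rw [h0, zero_pow two_ne_zero, mul_zero, Complex.ofReal_eq_zero] at hrt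
    exact hr.ne' hrt
  have hα : ((√(r / t ^ 2) : ℝ) : ℂ) ^ 2 = α := by
    rw [← Complex.ofReal_pow, Real.sq_sqrt (by positivity), Complex.ofReal_div, hrt,
      Complex.ofReal_pow, mul_div_cancel_right₀ _ (pow_ne_zero 2 ht)]
  refine ⟨laurentOfPoly (C (√(r / t ^ 2)) * Q), fun z hz => ?_⟩
  rw [lEval_laurentOfPoly, lEval_laurentOfPoly, h z hz, ← hα, map_mul, map_mul, aeval_C, aeval_C]
  simp only [Complex.coe_algebraMap]
  ring

/-- Fejér–Riesz-type factorization: a reciprocal real Laurent polynomial that is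
(real and) positive on the unit circle factors as b(w)·b(1/w) with b a real
Laurent polynomial. -/
theorem stmt15 (p : ℤ →₀ ℝ)
    (hrec : ∀ k, p k = p (-k))
    (hpos : ∀ θ : ℝ, ∃ r : ℝ, 0 < r ∧ lEval p (Complex.exp (Complex.I * θ)) = r) :
    ∃ b : ℤ →₀ ℝ, ∀ z : ℂ, z ≠ 0 → lEval b z * lEval b z⁻¹ = lEval p z := by
  obtain ⟨r, hr, hp1⟩ := hpos 0
  rw [Complex.ofReal_zero, mul_zero, Complex.exp_zero] at hp1
  have hp : p ≠ 0 := by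
    rintro rfl
    simp only [lEval, Finsupp.support_zero, Finset.sum_empty] at hp1
    exact hr.ne (Complex.ofReal_eq_zero.1 hp1.symm).symm
  set n := absDegree p
  have hshift (z : ℂ) (hz : z ≠ 0) : lEval p z = z ^ (-(n : ℤ)) * aeval z (shiftPoly p n) :=
    lEval_eq_zpow_mul_aeval_shiftPoly (fun _ => neg_absDegree_le) hz
  have hcirc (z : ℂ) (hz : ‖z‖ = 1) : aeval z (shiftPoly p n) ≠ 0 := by
    intro h0
    obtain ⟨θ, rfl⟩ := (Complex.norm_eq_one_iff z).1 hz
    obtain ⟨s, hs, hps⟩ := hpos θ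
    rw [mul_comm, hshift _ (Complex.exp_ne_zero _), h0, mul_zero] at hps
    exact hs.ne (Complex.ofReal_eq_zero.1 hps.symm).symm
  obtain ⟨Q, α, m, hdeg, hPQ⟩ :=
    exists_aeval_eq_mul_aeval_mul_aeval_inv _ (reverse_shiftPoly_absDegree hrec hp) hcirc
  have hm : m = n := by rw [natDegree_shiftPoly_absDegree hrec hp] at hdeg; omega
  refine exists_lEval_mul_lEval_inv_eq p Q α hr hp1 fun z hz => ?_
  have hzn : z ^ (-(n : ℤ)) * z ^ n = 1 := by
    rw [← zpow_natCast, ← zpow_add₀ hz, neg_add_cancel, zpow_zero]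
  rw [hshift z hz, hPQ z hz, hm]
  linear_combination (α * (aeval z Q * aeval z⁻¹ Q)) * hzn
end

section
/- Let a(w), d(w) be Laurent polynomials that take real values on the unit circle, such that the Laurent polynomial a(w)² + d(w)² is reciprocal, has real coefficients, and satisfies a(w)² + d(w)² < 1 on the unit circle. Then there exist Laurent polynomials b(w), c(w), real-valued on the unit circle, such that a(w)² + b(w)² + c(w)² + d(w)² = 1 for all w on the unit circle. -/
/-!
Fejér–Riesz: if `f = 1 - a² - d²` is positive on the unit circle, write `f(z) = z⁻ᵐ Q(z)` with a
polynomial `Q` of degree `≤ 2m`. Reality of `f` on the circle makes `Q` self-inversive, so its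
roots come in pairs `ρ, (conj ρ)⁻¹` with `ρ` off the circle (positivity), or `Q(0) = 0` together
with a vanishing top coefficient. Each pair contributes `|z - ρ|²` on the circle, and peeling the
pairs off one at a time gives `f = |p|²` there for a polynomial `p`. Since `conj z = z⁻¹` on the
circle, `Re p` and `Im p` are Laurent polynomials, and they are the required `b` and `c`.
-/

open Finset

/-- Evaluation of a Laurent polynomial with complex coefficients at a nonzero
complex number. -/
noncomputable def lEvalC (p : ℤ →₀ ℂ) (z : ℂ) : ℂ :=
  ∑ k ∈ p.support, p k * z ^ k

open Polynomial Complex ComplexConjugate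
-- `0 < w` for `w : ℂ` means that `w` is real and positive.
open scoped ComplexOrder

section LaurentEvaluation

lemma lEvalC_eq_linearCombination (p : ℤ →₀ ℂ) (z : ℂ) :
    lEvalC p z = Finsupp.linearCombination ℂ (fun k : ℤ => z ^ k) p := rfl

lemma lEvalC_add (p q : ℤ →₀ ℂ) (z : ℂ) : lEvalC (p + q) z = lEvalC p z + lEvalC q z := by
  simp only [lEvalC_eq_linearCombination, map_add]

lemma lEvalC_sub (p q : ℤ →₀ ℂ) (z : ℂ) : lEvalC (p - q) z = lEvalC p z - lEvalC q z := by
  simp only [lEvalC_eq_linearCombination, map_sub]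

lemma lEvalC_smul (c : ℂ) (p : ℤ →₀ ℂ) (z : ℂ) : lEvalC (c • p) z = c * lEvalC p z := by
  simp only [lEvalC_eq_linearCombination, map_smul, smul_eq_mul]

lemma lEvalC_sum {ι : Type*} (s : Finset ι) (p : ι → ℤ →₀ ℂ) (z : ℂ) :
    lEvalC (∑ i ∈ s, p i) z = ∑ i ∈ s, lEvalC (p i) z := by
  simp only [lEvalC_eq_linearCombination, map_sum]

lemma lEvalC_single (k : ℤ) (c : ℂ) (z : ℂ) : lEvalC (Finsupp.single k c) z = c * z ^ k := by
  simp only [lEvalC_eq_linearCombination, Finsupp.linearCombination_single, smul_eq_mul]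

end LaurentEvaluation

noncomputable def laurentOfPolynomial (p : ℂ[X]) : ℤ →₀ ℂ :=
  ∑ k ∈ range (p.natDegree + 1), Finsupp.single (k : ℤ) (p.coeff k)

noncomputable def laurentConjOfPolynomial (p : ℂ[X]) : ℤ →₀ ℂ :=
  ∑ k ∈ range (p.natDegree + 1), Finsupp.single (-(k : ℤ)) (conj (p.coeff k))

lemma lEvalC_laurentOfPolynomial (p : ℂ[X]) (z : ℂ) :
    lEvalC (laurentOfPolynomial p) z = p.eval z := by
  simp only [laurentOfPolynomial, lEvalC_sum, lEvalC_single, zpow_natCast, eval_eq_sum_range]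

lemma lEvalC_laurentConjOfPolynomial (p : ℂ[X]) {z : ℂ} (hz : ‖z‖ = 1) :
    lEvalC (laurentConjOfPolynomial p) z = conj (p.eval z) := by
  simp only [laurentConjOfPolynomial, lEvalC_sum, lEvalC_single, eval_eq_sum_range, map_sum,
    map_mul, map_pow, ← inv_eq_conj hz, zpow_neg, zpow_natCast, inv_pow]

lemma exists_lEvalC_eq_re_and_im (p : ℂ[X]) : ∃ b c : ℤ →₀ ℂ, ∀ z : ℂ, ‖z‖ = 1 →
    lEvalC b z = (p.eval z).re ∧ lEvalC c z = (p.eval z).im := by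
  refine ⟨(2 : ℂ)⁻¹ • (laurentOfPolynomial p + laurentConjOfPolynomial p),
    (2 * I)⁻¹ • (laurentOfPolynomial p - laurentConjOfPolynomial p),
    fun z hz => ⟨?_, ?_⟩⟩
  · rw [re_eq_add_conj, lEvalC_smul, lEvalC_add, lEvalC_laurentOfPolynomial,
      lEvalC_laurentConjOfPolynomial p hz, inv_mul_eq_div]
  · rw [im_eq_sub_conj, lEvalC_smul, lEvalC_sub, lEvalC_laurentOfPolynomial,
      lEvalC_laurentConjOfPolynomial p hz, inv_mul_eq_div]

lemma exists_polynomial_eval_eq_pow_mul_lEvalC (q : ℤ →₀ ℂ) {n : ℕ}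
    (hq : ∀ k ∈ q.support, k.natAbs ≤ n) :
    ∃ Q : ℂ[X], Q.natDegree ≤ 2 * n ∧ ∀ z : ℂ, z ≠ 0 → Q.eval z = z ^ n * lEvalC q z := by
  refine ⟨∑ k ∈ q.support, C (q k) * X ^ (k + n).toNat, ?_, fun z hz => ?_⟩
  · refine natDegree_sum_le_of_forall_le _ _ fun k hk => (natDegree_C_mul_le _ _).trans ?_
    have := hq k hk
    rw [natDegree_X_pow]
    omega
  · rw [eval_finsetSum, lEvalC, mul_sum]
    refine sum_congr rfl fun k hk => ?_
    have hk : ((k + n).toNat : ℤ) = k + n := by have := hq k hk; omega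
    rw [eval_mul, eval_C, eval_pow, eval_X, ← zpow_natCast, hk, zpow_add₀ hz, zpow_natCast]
    ring

lemma exists_polynomial_eval_eq_one_sub_sq_sub_sq (a d : ℤ →₀ ℂ) :
    ∃ (m : ℕ) (F : ℂ[X]), F.natDegree ≤ 2 * m ∧ ∀ z : ℂ, ‖z‖ = 1 →
      (z ^ m)⁻¹ * F.eval z = 1 - lEvalC a z ^ 2 - lEvalC d z ^ 2 := by
  set n := max (a.support.sup Int.natAbs) (d.support.sup Int.natAbs)
  obtain ⟨A, hAdeg, hA⟩ := exists_polynomial_eval_eq_pow_mul_lEvalC a (n := n)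
    fun k hk => (le_sup (f := Int.natAbs) hk).trans (le_max_left _ _)
  obtain ⟨D, hDdeg, hD⟩ := exists_polynomial_eval_eq_pow_mul_lEvalC d (n := n)
    fun k hk => (le_sup (f := Int.natAbs) hk).trans (le_max_right _ _)
  refine ⟨2 * n, X ^ (2 * n) - A ^ 2 - D ^ 2, ?_, fun z hz => ?_⟩
  · refine (natDegree_sub_le _ _).trans (max_le ((natDegree_sub_le _ _).trans (max_le ?_ ?_)) ?_)
    · rw [natDegree_X_pow]; omega
    · exact natDegree_pow_le.trans (by nlinarith)
    · exact natDegree_pow_le.trans (by nlinarith)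
  · have hz0 : z ≠ 0 := norm_ne_zero_iff.1 (by simp [hz])
    simp only [eval_sub, eval_pow, eval_X, hA z hz0, hD z hz0]
    field_simp
    ring

lemma infinite_setOf_norm_eq_one : {z : ℂ | ‖z‖ = 1}.Infinite := by
  have h : {z : ℂ | ‖z‖ = 1} = Metric.sphere 0 1 := by ext; simp
  rw [h]
  exact (isPreconnected_sphere (by simp) 0 1).infinite_of_nontrivial
    ⟨1, by simp, -1, by simp, by norm_num⟩

lemma eval_reflect_of_ne_zero {K : Type*} [Field K] {f : K[X]} {N : ℕ} (hf : f.natDegree ≤ N)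
    {x : K} (hx : x ≠ 0) : (reflect N f).eval x = x ^ N * f.eval x⁻¹ := by
  have : Invertible x⁻¹ := invertibleOfNonzero (inv_ne_zero hx)
  have h := eval₂_reflect_mul_pow (RingHom.id K) x⁻¹ N f hf
  rw [invOf_eq_inv, inv_inv] at h
  change (reflect N f).eval x * x⁻¹ ^ N = f.eval x⁻¹ at h
  rw [← h, inv_pow, mul_left_comm, mul_inv_cancel₀ (pow_ne_zero _ hx), mul_one]

/-- `Q` equals its conjugate reciprocal `z ^ N * conj (Q (conj z)⁻¹)`. -/
def IsSelfInversive (N : ℕ) (Q : ℂ[X]) : Prop :=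
  reflect N (Q.map (starRingEnd ℂ)) = Q

section FejerRiesz

variable {m N : ℕ} {Q : ℂ[X]}

lemma isSelfInversive_of_im_eq_zero (hdeg : Q.natDegree ≤ 2 * m)
    (hreal : ∀ z : ℂ, ‖z‖ = 1 → ((z ^ m)⁻¹ * Q.eval z).im = 0) :
    IsSelfInversive (2 * m) Q := by
  refine eq_of_infinite_eval_eq _ _ (infinite_setOf_norm_eq_one.mono fun z (hz : ‖z‖ = 1) => ?_)
  have hz0 : z ≠ 0 := norm_ne_zero_iff.1 (by simp [hz])
  have hconj := conj_eq_iff_im.2 (hreal z hz)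
  rw [map_mul, map_inv₀, map_pow, ← inv_eq_conj hz, inv_pow, inv_inv] at hconj
  change (reflect (2 * m) (Q.map (starRingEnd ℂ))).eval z = Q.eval z
  rw [eval_reflect_of_ne_zero (natDegree_map_le.trans hdeg) hz0, inv_eq_conj hz,
    eval_map_apply, two_mul, pow_add, mul_assoc, hconj,
    mul_inv_cancel_left₀ (pow_ne_zero _ hz0)]

lemma IsSelfInversive.coeff_zero (hQ : IsSelfInversive N Q) : Q.coeff 0 = conj (Q.coeff N) := by
  conv_lhs => rw [← hQ]
  rw [coeff_reflect, revAt_le (Nat.zero_le _), Nat.sub_zero, coeff_map]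

lemma IsSelfInversive.isRoot_inv_conj (hQ : IsSelfInversive N Q) (hdeg : Q.natDegree ≤ N)
    {ρ : ℂ} (hρ : Q.IsRoot ρ) (hρ0 : ρ ≠ 0) : Q.IsRoot (conj ρ)⁻¹ := by
  have hρ' : conj ρ ≠ 0 := star_ne_zero.2 hρ0
  rw [IsRoot, ← hQ, eval_reflect_of_ne_zero (natDegree_map_le.trans hdeg) (inv_ne_zero hρ'),
    inv_inv, eval_map_apply, hρ.eq_zero, map_zero, mul_zero]

lemma IsSelfInversive.natDegree_divX_le (hQ : IsSelfInversive (2 * (m + 1)) Q)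
    (hdeg : Q.natDegree ≤ 2 * (m + 1)) (h0 : Q.coeff 0 = 0) : Q.divX.natDegree ≤ 2 * m := by
  have htop : Q.coeff (2 * (m + 1)) = 0 := by
    rw [← conj_conj (Q.coeff _), ← hQ.coeff_zero, h0, map_zero]
  have : Q.natDegree ≠ 2 * (m + 1) := fun h => by
    rw [← h, ← leadingCoeff, leadingCoeff_eq_zero] at htop
    simp [htop] at h
  rw [natDegree_divX_eq_natDegree_tsub_one]
  omega

lemma sub_mul_sub_inv_conj_eq_normSq_mul {z ρ : ℂ} (hz : ‖z‖ = 1) (hρ : ρ ≠ 0) :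
    (z - ρ) * (z - (conj ρ)⁻¹) = normSq (z - ρ) * (-(conj ρ)⁻¹ * z) := by
  have hz0 : z ≠ 0 := norm_ne_zero_iff.1 (by simp [hz])
  have hρ' : conj ρ ≠ 0 := star_ne_zero.2 hρ
  rw [← mul_conj, map_sub, ← inv_eq_conj hz]
  field_simp
  ring

lemma exists_normSq_sub_mul_of_coeff_zero_ne_zero (hdeg : Q.natDegree ≤ 2 * (m + 1))
    (hpos : ∀ z : ℂ, ‖z‖ = 1 → 0 < (z ^ (m + 1))⁻¹ * Q.eval z) (h0 : Q.coeff 0 ≠ 0) :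
    ∃ (ρ : ℂ) (Q' : ℂ[X]), ‖ρ‖ ≠ 1 ∧ Q'.natDegree ≤ 2 * m ∧ ∀ z : ℂ, ‖z‖ = 1 →
      (z ^ (m + 1))⁻¹ * Q.eval z = normSq (z - ρ) * ((z ^ m)⁻¹ * Q'.eval z) := by
  have hQ := isSelfInversive_of_im_eq_zero hdeg fun z hz => (pos_iff.1 (hpos z hz)).2.symm
  have hQ0 : Q ≠ 0 := by rintro rfl; exact h0 rfl
  have hQdeg : Q.natDegree = 2 * (m + 1) :=
    natDegree_eq_of_le_of_coeff_ne_zero hdeg fun h => h0 <| by rw [hQ.coeff_zero, h, map_zero]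
  obtain ⟨ρ, hρ⟩ := exists_root (f := Q) <| by
    rw [degree_eq_natDegree hQ0, hQdeg]; exact_mod_cast Nat.succ_pos _
  have hρ0 : ρ ≠ 0 := by rintro rfl; exact h0 (by rwa [coeff_zero_eq_eval_zero])
  have hρ1 : ‖ρ‖ ≠ 1 := fun h => (hpos ρ h).ne' (by rw [hρ.eq_zero, mul_zero])
  have hσρ : (conj ρ)⁻¹ ≠ ρ := fun h => hρ1 <| by
    have : ‖ρ‖ ^ 2 = 1 := by
      rw [← normSq_eq_norm_sq, ← ofReal_inj, ← mul_conj]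
      nth_rewrite 1 [← h]
      exact inv_mul_cancel₀ (star_ne_zero.2 hρ0)
    exact (pow_eq_one_iff_of_nonneg (norm_nonneg ρ) two_ne_zero).1 this
  obtain ⟨Q₃, hQ₃⟩ : (X - C ρ) * (X - C (conj ρ)⁻¹) ∣ Q :=
    (isCoprime_X_sub_C_of_isUnit_sub (sub_ne_zero.2 hσρ.symm).isUnit).mul_dvd
      (dvd_iff_isRoot.2 hρ) (dvd_iff_isRoot.2 (hQ.isRoot_inv_conj hdeg hρ hρ0))
  refine ⟨ρ, C (-(conj ρ)⁻¹) * Q₃, hρ1, (natDegree_C_mul_le _ _).trans ?_, fun z hz => ?_⟩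
  · have hQ₃0 : Q₃ ≠ 0 := by rintro rfl; rw [mul_zero] at hQ₃; exact hQ0 hQ₃
    have := congrArg natDegree hQ₃
    rw [natDegree_mul (mul_ne_zero (X_sub_C_ne_zero _) (X_sub_C_ne_zero _)) hQ₃0,
      natDegree_mul (X_sub_C_ne_zero _) (X_sub_C_ne_zero _), natDegree_X_sub_C,
      natDegree_X_sub_C, hQdeg] at this
    omega
  · have hz0 : z ≠ 0 := norm_ne_zero_iff.1 (by simp [hz])
    rw [hQ₃, eval_mul, eval_mul, eval_sub, eval_sub, eval_X, eval_C, eval_C,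
      sub_mul_sub_inv_conj_eq_normSq_mul hz hρ0, eval_mul, eval_C, pow_succ]
    field_simp

lemma exists_normSq_mul_of_pos_on_circle (hdeg : Q.natDegree ≤ 2 * (m + 1))
    (hpos : ∀ z : ℂ, ‖z‖ = 1 → 0 < (z ^ (m + 1))⁻¹ * Q.eval z) :
    ∃ g Q' : ℂ[X], Q'.natDegree ≤ 2 * m ∧ ∀ z : ℂ, ‖z‖ = 1 → g.eval z ≠ 0 ∧
      (z ^ (m + 1))⁻¹ * Q.eval z = normSq (g.eval z) * ((z ^ m)⁻¹ * Q'.eval z) := by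
  by_cases h0 : Q.coeff 0 = 0
  · have hQ := isSelfInversive_of_im_eq_zero hdeg fun z hz => (pos_iff.1 (hpos z hz)).2.symm
    refine ⟨1, Q.divX, hQ.natDegree_divX_le hdeg h0, fun z hz => ⟨by simp, ?_⟩⟩
    have hz0 : z ≠ 0 := norm_ne_zero_iff.1 (by simp [hz])
    conv_lhs => rw [← divX_mul_X_add Q]
    rw [eval_add, eval_mul, eval_X, eval_C, h0, add_zero, eval_one, map_one, ofReal_one,
      pow_succ]
    field_simp
  · obtain ⟨ρ, Q', hρ, hdeg', hQ'⟩ := exists_normSq_sub_mul_of_coeff_zero_ne_zero hdeg hpos h0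
    refine ⟨X - C ρ, Q', hdeg', fun z hz => ⟨?_, by simpa using hQ' z hz⟩⟩
    rw [eval_sub, eval_X, eval_C, sub_ne_zero]
    rintro rfl
    exact hρ hz

/-- The Fejér–Riesz theorem for the Laurent polynomial `z ↦ z⁻ᵐ Q(z)`. -/
theorem exists_eq_normSq_of_pos_on_circle (hdeg : Q.natDegree ≤ 2 * m)
    (hpos : ∀ z : ℂ, ‖z‖ = 1 → 0 < (z ^ m)⁻¹ * Q.eval z) :
    ∃ p : ℂ[X], ∀ z : ℂ, ‖z‖ = 1 → (z ^ m)⁻¹ * Q.eval z = normSq (p.eval z) := by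
  induction m generalizing Q with
  | zero =>
    rw [eq_C_of_natDegree_le_zero hdeg] at hpos ⊢
    obtain ⟨hre, him⟩ := pos_iff.1 (by simpa using hpos 1 (by simp))
    refine ⟨C (Real.sqrt (Q.coeff 0).re : ℂ), fun z _ => ?_⟩
    rw [eval_C, eval_C, normSq_ofReal, Real.mul_self_sqrt hre.le, pow_zero, inv_one, one_mul]
    exact Complex.ext rfl him.symm
  | succ m ih =>
    obtain ⟨g, Q', hdeg', hg⟩ := exists_normSq_mul_of_pos_on_circle hdeg hpos
    have hpos' : ∀ z : ℂ, ‖z‖ = 1 → 0 < (z ^ m)⁻¹ * Q'.eval z := by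
      intro z hz
      obtain ⟨hgz, hQz⟩ := hg z hz
      have ht : (0 : ℂ) < normSq (g.eval z) := zero_lt_real.2 (normSq_pos.2 hgz)
      rw [← inv_mul_cancel_left₀ ht.ne' ((z ^ m)⁻¹ * Q'.eval z), ← hQz]
      exact mul_pos (inv_pos.2 ht) (hpos z hz)
    obtain ⟨p, hp⟩ := ih hdeg' hpos'
    exact ⟨g * p, fun z hz => by rw [(hg z hz).2, hp z hz, eval_mul, map_mul, ofReal_mul]⟩

end FejerRiesz

theorem stmt16_general (a d : ℤ →₀ ℂ)
    (ha : ∀ z : ℂ, ‖z‖ = 1 → (lEvalC a z).im = 0)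
    (hd : ∀ z : ℂ, ‖z‖ = 1 → (lEvalC d z).im = 0)
    (hlt : ∀ z : ℂ, ‖z‖ = 1 →
      (lEvalC a z).re ^ 2 + (lEvalC d z).re ^ 2 < 1) :
    ∃ b c : ℤ →₀ ℂ,
      (∀ z : ℂ, ‖z‖ = 1 → (lEvalC b z).im = 0) ∧
      (∀ z : ℂ, ‖z‖ = 1 → (lEvalC c z).im = 0) ∧
      ∀ z : ℂ, ‖z‖ = 1 →
        lEvalC a z ^ 2 + lEvalC b z ^ 2 + lEvalC c z ^ 2 + lEvalC d z ^ 2 = 1 := by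
  obtain ⟨m, F, hdeg, hF⟩ := exists_polynomial_eval_eq_one_sub_sq_sub_sq a d
  have hpos : ∀ z : ℂ, ‖z‖ = 1 → 0 < (z ^ m)⁻¹ * F.eval z := fun z hz => by
    rw [hF z hz, pos_iff]
    simp only [sub_re, sub_im, one_re, one_im, pow_two, mul_re, mul_im, ha z hz, hd z hz]
    constructor <;> nlinarith [hlt z hz]
  obtain ⟨p, hp⟩ := exists_eq_normSq_of_pos_on_circle hdeg hpos
  obtain ⟨b, c, hbc⟩ := exists_lEvalC_eq_re_and_im p
  refine ⟨b, c, fun z hz => by simp [(hbc z hz).1], fun z hz => by simp [(hbc z hz).2],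
    fun z hz => ?_⟩
  have h := (hF z hz).symm.trans (hp z hz)
  rw [normSq_apply] at h
  push_cast at h
  rw [(hbc z hz).1, (hbc z hz).2]
  linear_combination -h

/-- Haah's completion theorem: if `a, d` are Laurent polynomials real-valued on
the unit circle, `a² + d²` is reciprocal and `< 1` on the unit circle, then
there are Laurent polynomials `b, c`, real-valued on the unit circle, with
`a² + b² + c² + d² = 1` on the unit circle. -/
theorem stmt16 (a d : ℤ →₀ ℂ)
    (ha : ∀ z : ℂ, ‖z‖ = 1 → (lEvalC a z).im = 0)
    (hd : ∀ z : ℂ, ‖z‖ = 1 → (lEvalC d z).im = 0)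
    (hrec : ∀ z : ℂ, z ≠ 0 →
      lEvalC a z ^ 2 + lEvalC d z ^ 2 = lEvalC a z⁻¹ ^ 2 + lEvalC d z⁻¹ ^ 2)
    (hlt : ∀ z : ℂ, ‖z‖ = 1 →
      (lEvalC a z).re ^ 2 + (lEvalC d z).re ^ 2 < 1) :
    ∃ b c : ℤ →₀ ℂ,
      (∀ z : ℂ, ‖z‖ = 1 → (lEvalC b z).im = 0) ∧
      (∀ z : ℂ, ‖z‖ = 1 → (lEvalC c z).im = 0) ∧
      ∀ z : ℂ, ‖z‖ = 1 →
        lEvalC a z ^ 2 + lEvalC b z ^ 2 + lEvalC c z ^ 2 + lEvalC d z ^ 2 = 1 :=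
  stmt16_general a d ha hd hlt
end
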